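/- arXiv:2410.00696 — 2 statements merged into one kernel-verified Lean document; each statement's English description precedes it below -/
import Mathlib

section
/- Let B, γ, ω₀, α > 0 and S(ε, I₀) = ε(3γ/(4ω₀) + (√2 B/(8ω₀))·I₀^{-3/2}). In the regime where I₀ is large (so that the I₀^{-3/2} term is neglected and S ≈ 3εγ/(4ω₀), and where the width condition is evaluated at the saddle amplitude), the threshold condition -ε(√2 B/(2ω₀)) + α/S < 0 on ε, after substituting the appropriate critical value of I₀, holds if and only if ε² > (2^{10/3}/3^{5/3})·B^{-4/3}·γ^{-2/3}·ω₀²·α. -/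
/-!
At the saddle amplitude `I₀ = x^{2/3}`, `x = √2 B / (3γ)`, one has `√2 B · I₀^{-3/2} = 3γ`, so
`S = 9εγ/(8ω₀)`, while `√I₀ = x^{1/3}`. The width condition then reads
`α < ε² · (27γ²/(16ω₀²)) x^{4/3}`, and the threshold constant is the reciprocal of
`(27γ²/16) x^{4/3}`, which is checked after cubing, where all exponents become integers.
-/

open Real

lemma rpow_pow_eq_zpow {y r : ℝ} (hy : 0 < y) {k : ℕ} {n : ℤ} (h : (k : ℝ) * r = n) :
    (y ^ r) ^ k = y ^ n := by
  rw [← rpow_natCast, ← rpow_mul hy.le, mul_comm, h, rpow_intCast]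

lemma rpow_two_thirds_rpow_neg_three_halves {x : ℝ} (hx : 0 ≤ x) :
    (x ^ ((2 : ℝ) / 3)) ^ (-(3 : ℝ) / 2) = x⁻¹ := by
  rw [← rpow_mul hx]
  norm_num [rpow_neg_one]

lemma sqrt_rpow_two_thirds {x : ℝ} (hx : 0 ≤ x) :
    √(x ^ ((2 : ℝ) / 3)) = x ^ ((1 : ℝ) / 3) := by
  rw [sqrt_eq_rpow, ← rpow_mul hx]
  norm_num

lemma threshold_constant_mul_eq_one {B γ : ℝ} (hB : 0 < B) (hγ : 0 < γ) :
    (2 ^ ((10 : ℝ) / 3) / 3 ^ ((5 : ℝ) / 3)) * B ^ (-(4 : ℝ) / 3) * γ ^ (-(2 : ℝ) / 3) *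
      (27 * γ ^ 2 / 16 * (√2 * B / (3 * γ)) ^ ((4 : ℝ) / 3)) = 1 := by
  have hx : 0 < √2 * B / (3 * γ) := by positivity
  refine (pow_eq_one_iff_of_nonneg (by positivity) three_ne_zero).mp ?_
  simp only [mul_pow, div_pow]
  rw [rpow_pow_eq_zpow two_pos (n := 10) (by norm_num),
    rpow_pow_eq_zpow three_pos (n := 5) (by norm_num),
    rpow_pow_eq_zpow hB (n := -4) (by norm_num),
    rpow_pow_eq_zpow hγ (n := -2) (by norm_num),
    rpow_pow_eq_zpow hx (n := 4) (by norm_num)]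
  have hs : √2 ^ 4 = 4 := by
    rw [show (4 : ℕ) = 2 * 2 from rfl, pow_mul, sq_sqrt zero_le_two]; norm_num
  simp only [zpow_neg]
  field_simp
  rw [hs]
  norm_num

theorem stmt_10_general (B γ ω₀ α ε : ℝ) (hB : B > 0) (hγ : γ > 0) (hω : ω₀ > 0)
    (hε : ε > 0)
    (I₀ S : ℝ)
    (hI₀ : I₀ = (Real.sqrt 2 * B / (3 * γ)) ^ ((2 : ℝ) / 3))
    (hS : S = ε * (3 * γ / (4 * ω₀) + (Real.sqrt 2 * B / (8 * ω₀)) * I₀ ^ (-(3 : ℝ) / 2))) :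
    (-ε * (Real.sqrt 2 * B / (2 * ω₀)) * Real.sqrt I₀ + α / S < 0 ↔
      ε ^ 2 > ((2 : ℝ) ^ ((10 : ℝ) / 3) / (3 : ℝ) ^ ((5 : ℝ) / 3)) *
        B ^ (-(4 : ℝ) / 3) * γ ^ (-(2 : ℝ) / 3) * ω₀ ^ 2 * α) := by
  have hC := threshold_constant_mul_eq_one hB hγ
  set x := √2 * B / (3 * γ) with hx_def
  have hx : 0 < x := by positivity
  have hsB : √2 * B = 3 * γ * x := by rw [hx_def]; field_simp
  have hS_eq : S = ε * (9 * γ / (8 * ω₀)) := by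
    rw [hS, hI₀, rpow_two_thirds_rpow_neg_three_halves hx.le, hsB]
    field_simp
    ring
  set D := 27 * γ ^ 2 / (16 * ω₀ ^ 2) * x ^ ((4 : ℝ) / 3) with hD_def
  have hD : 0 < D := by positivity
  have hgain : ε * (√2 * B / (2 * ω₀)) * x ^ ((1 : ℝ) / 3) * S = ε ^ 2 * D := by
    rw [hS_eq, hsB, hD_def, show (4 : ℝ) / 3 = 1 + 1 / 3 by norm_num, rpow_add hx, rpow_one]
    field_simp
    ring
  have hK : (2 ^ ((10 : ℝ) / 3) / 3 ^ ((5 : ℝ) / 3)) * B ^ (-(4 : ℝ) / 3) *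
      γ ^ (-(2 : ℝ) / 3) * ω₀ ^ 2 * α = α / D := by
    rw [eq_div_iff hD.ne', hD_def]
    calc _ = ω₀ ^ 2 * α / ω₀ ^ 2 * (2 ^ ((10 : ℝ) / 3) / 3 ^ ((5 : ℝ) / 3) * B ^ (-(4 : ℝ) / 3) *
          γ ^ (-(2 : ℝ) / 3) * (27 * γ ^ 2 / 16 * x ^ ((4 : ℝ) / 3))) := by ring
      _ = α := by rw [hC]; field_simp
  rw [hI₀, sqrt_rpow_two_thirds hx.le, hK, gt_iff_lt, div_lt_iff₀ hD, ← hgain,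
    ← div_lt_iff₀ (by rw [hS_eq]; positivity)]
  constructor <;> intro h <;> linarith

/-- Autoresonance threshold: with S(ε, I₀) = ε(3γ/(4ω₀) + (√2B/(8ω₀))I₀^{-3/2})
and the width condition -ε(√2B/(2ω₀))√I₀ + α/S < 0 evaluated at the critical
(saddle) amplitude I₀ = (√2B/(3γ))^{2/3}, the condition holds iff
ε² > (2^{10/3}/3^{5/3}) B^{-4/3} γ^{-2/3} ω₀² α. -/
theorem stmt_10 (B γ ω₀ α ε : ℝ) (hB : B > 0) (hγ : γ > 0) (hω : ω₀ > 0)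
    (hα : α > 0) (hε : ε > 0)
    (I₀ S : ℝ)
    (hI₀ : I₀ = (Real.sqrt 2 * B / (3 * γ)) ^ ((2 : ℝ) / 3))
    (hS : S = ε * (3 * γ / (4 * ω₀) + (Real.sqrt 2 * B / (8 * ω₀)) * I₀ ^ (-(3 : ℝ) / 2))) :
    (-ε * (Real.sqrt 2 * B / (2 * ω₀)) * Real.sqrt I₀ + α / S < 0 ↔
      ε ^ 2 > ((2 : ℝ) ^ ((10 : ℝ) / 3) / (3 : ℝ) ^ ((5 : ℝ) / 3)) *
        B ^ (-(4 : ℝ) / 3) * γ ^ (-(2 : ℝ) / 3) * ω₀ ^ 2 * α) :=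
  stmt_10_general B γ ω₀ α ε hB hγ hω hε I₀ S hI₀ hS
end

section
/- Suppose y: [τ₀, ∞) → ℝⁿ solves dy/dτ = εf(y, ω₀τ) where f(y, ξ) is 2π-periodic in ξ, and Y solves the truncated averaged equation dY/dτ = εF₀(Y) with F₀(Y) = (1/(2π))∫₀^{2π} f(Y, ξ)dξ and Y(τ₀) = y(τ₀). If f is bounded with bounded, Lipschitz first derivatives, then there are constants C, ε₀ > 0 such that for all 0 < ε ≤ ε₀ and all stroboscopic times τ_j = τ₀ + j·(2π/ω₀) with τ_j - τ₀ ≤ L/ε, one has |y(τ_j) - Y(τ_j)| ≤ Cε. -/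
/-!
Freezing the slow variable over one period `T = 2π/ω₀` costs only `O(ε²T²)`: the solution moves
by `O(εT)`, so the vector field changes by `O(ε²T)`. With the slow variable frozen, the fast phase
sweeps exactly one period and the increment is `εT F₀(y)`, which is also the Euler increment of
the averaged flow up to `O(ε²T²)`. The errors `e_k` at stroboscopic times thus obey
`e_{k+1} ≤ (1 + εMT) e_k + 2ε²M²T²`, and the discrete Grönwall inequality over the
`k ≤ L/(εT)` periods gives `e_k ≤ 2εMT e^{ML}`.
-/

open Real

section PeriodAverage

variable {E G : Type*} [NormedAddCommGroup E] [NormedAddCommGroup G] [NormedSpace ℝ G]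

noncomputable def periodAverage (g : ℝ → G) : G :=
  (2 * π)⁻¹ • ∫ ξ in (0 : ℝ)..(2 * π), g ξ

theorem norm_periodAverage_le {g : ℝ → G} {C : ℝ} (h : ∀ ξ, ‖g ξ‖ ≤ C) :
    ‖periodAverage g‖ ≤ C := by
  have hπ : 0 < 2 * π := two_pi_pos
  have hint := intervalIntegral.norm_integral_le_of_norm_le_const (a := 0) (b := 2 * π)
    fun ξ _ => h ξ
  rw [sub_zero, abs_of_pos hπ] at hint
  rw [periodAverage, norm_smul, norm_inv, Real.norm_of_nonneg hπ.le]
  calc (2 * π)⁻¹ * ‖∫ ξ in (0 : ℝ)..(2 * π), g ξ‖ ≤ (2 * π)⁻¹ * (C * (2 * π)) := by gcongr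
    _ = C := by field_simp

theorem norm_periodAverage_sub_le {f : E → ℝ → G} {K : ℝ} (hf : ∀ x, Continuous (f x))
    (hK : ∀ x x' ξ, ‖f x ξ - f x' ξ‖ ≤ K * ‖x - x'‖) (x x' : E) :
    ‖periodAverage (f x) - periodAverage (f x')‖ ≤ K * ‖x - x'‖ := by
  rw [periodAverage, periodAverage, ← smul_sub,
    ← intervalIntegral.integral_sub ((hf x).intervalIntegrable _ _)
      ((hf x').intervalIntegrable _ _)]
  exact norm_periodAverage_le (hK x x')

theorem Function.Periodic.integral_comp_mul_eq_smul_periodAverage {g : ℝ → G}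
    (hg : Function.Periodic g (2 * π)) {ω : ℝ} (hω : ω ≠ 0) (a : ℝ) :
    ∫ s in a..a + 2 * π / ω, g (ω * s) = (2 * π / ω) • periodAverage g := by
  rw [intervalIntegral.integral_comp_mul_left _ hω, mul_add, mul_div_cancel₀ _ hω,
    hg.intervalIntegral_add_eq (ω * a) 0, zero_add, periodAverage, smul_smul]
  congr 1
  field_simp

end PeriodAverage

theorem norm_sub_le_of_norm_fderiv_uncurry_le {E T G : Type*}
    [NormedAddCommGroup E] [NormedSpace ℝ E] [NormedAddCommGroup T] [NormedSpace ℝ T]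
    [NormedAddCommGroup G] [NormedSpace ℝ G] {f : E → T → G} {M : ℝ}
    (hf : Differentiable ℝ fun p : E × T => f p.1 p.2)
    (hM : ∀ p, ‖fderiv ℝ (fun p : E × T => f p.1 p.2) p‖ ≤ M) (x x' : E) (ξ : T) :
    ‖f x ξ - f x' ξ‖ ≤ M * ‖x - x'‖ := by
  have h := convex_univ.norm_image_sub_le_of_norm_fderiv_le (fun p _ => hf p) (fun p _ => hM p)
    (Set.mem_univ (x', ξ)) (Set.mem_univ (x, ξ))
  rwa [Prod.mk_sub_mk, sub_self, Prod.norm_mk, norm_zero,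
    max_eq_left (norm_nonneg _)] at h

theorem norm_sub_le_one_add_mul_add {E : Type*} [SeminormedAddCommGroup E]
    {x X x' X' v V : E} {K r : ℝ} (hx : ‖x' - x - v‖ ≤ r) (hX : ‖X' - X - V‖ ≤ r)
    (hv : ‖v - V‖ ≤ K * ‖x - X‖) :
    ‖x' - X'‖ ≤ (1 + K) * ‖x - X‖ + 2 * r := by
  have hsplit : x' - X' = (x - X) + (v - V) + ((x' - x - v) - (X' - X - V)) := by abel
  calc ‖x' - X'‖ ≤ ‖x - X‖ + ‖v - V‖ + (‖x' - x - v‖ + ‖X' - X - V‖) := by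
        rw [hsplit]; exact (norm_add₃_le ..).trans (by gcongr; exact norm_sub_le _ _)
    _ ≤ (1 + K) * ‖x - X‖ + 2 * r := by linarith

section Increments

variable {E : Type*} [NormedAddCommGroup E] [NormedSpace ℝ E] [CompleteSpace E]

theorem norm_sub_sub_integral_le_of_hasDerivAt {x : ℝ → E} {g : E → ℝ → E} {B K t h : ℝ}
    (hx : ∀ s, HasDerivAt x (g (x s) s) s) (hB : ∀ z s, ‖g z s‖ ≤ B) (hK₀ : 0 ≤ K)
    (hK : ∀ z z' s, ‖g z s - g z' s‖ ≤ K * ‖z - z'‖) (hgt : Continuous (g (x t)))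
    (hh : 0 ≤ h) :
    ‖x (t + h) - x t - ∫ s in t..t + h, g (x t) s‖ ≤ K * B * h ^ 2 := by
  have hB₀ : 0 ≤ B := (norm_nonneg _).trans (hB (x t) t)
  have hdrift : ∀ s, ‖x s - x t‖ ≤ B * ‖s - t‖ := fun s =>
    convex_univ.norm_image_sub_le_of_norm_hasDerivWithin_le
      (fun s _ => (hx s).hasDerivWithinAt) (fun s _ => hB _ _) trivial trivial
  have hderiv : ∀ s, HasDerivAt (fun s => x s - ∫ r in t..s, g (x t) r)
      (g (x s) s - g (x t) s) s := fun s =>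
    (hx s).sub (hgt.integral_hasStrictDerivAt t s).hasDerivAt
  have hbound : ∀ s ∈ Set.Icc t (t + h), ‖g (x s) s - g (x t) s‖ ≤ K * B * h := by
    intro s hs
    have hst : ‖s - t‖ ≤ h := by
      rw [Real.norm_of_nonneg (sub_nonneg.2 hs.1)]; linarith [hs.2]
    calc ‖g (x s) s - g (x t) s‖ ≤ K * ‖x s - x t‖ := hK _ _ _
      _ ≤ K * (B * h) := by gcongr; exact (hdrift s).trans (by gcongr)
      _ = K * B * h := by ring
  have h_mvt := (convex_Icc t (t + h)).norm_image_sub_le_of_norm_hasDerivWithin_le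
    (fun s _ => (hderiv s).hasDerivWithinAt) hbound (Set.left_mem_Icc.2 (by linarith))
    (Set.right_mem_Icc.2 (by linarith))
  rw [intervalIntegral.integral_same, sub_zero, add_sub_cancel_left,
    Real.norm_of_nonneg hh, sub_right_comm] at h_mvt
  rwa [sq, ← mul_assoc]

theorem norm_sub_sub_smul_le_of_hasDerivAt {x : ℝ → E} {G : E → E} {B K t h : ℝ}
    (hx : ∀ s, HasDerivAt x (G (x s)) s) (hB : ∀ z, ‖G z‖ ≤ B) (hK₀ : 0 ≤ K)
    (hK : ∀ z z', ‖G z - G z'‖ ≤ K * ‖z - z'‖) (hh : 0 ≤ h) :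
    ‖x (t + h) - x t - h • G (x t)‖ ≤ K * B * h ^ 2 := by
  have h := norm_sub_sub_integral_le_of_hasDerivAt (g := fun z _ => G z) (t := t) hx
    (fun z _ => hB z) hK₀ (fun z z' _ => hK z z') continuous_const hh
  rwa [intervalIntegral.integral_const, add_sub_cancel_left] at h

theorem norm_sub_sub_smul_periodAverage_le_of_oscillatory {f : E → ℝ → E} {y : ℝ → E}
    {ε ω M : ℝ} (hε : 0 ≤ ε) (hω : 0 < ω) (hper : ∀ z, Function.Periodic (f z) (2 * π))
    (hf : ∀ z, Continuous (f z)) (hM : ∀ z ξ, ‖f z ξ‖ ≤ M)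
    (hK : ∀ z z' ξ, ‖f z ξ - f z' ξ‖ ≤ M * ‖z - z'‖)
    (hy : ∀ s, HasDerivAt y (ε • f (y s) (ω * s)) s) (t : ℝ) :
    ‖y (t + 2 * π / ω) - y t - (ε * (2 * π / ω)) • periodAverage (f (y t))‖
      ≤ ε * M * (ε * M) * (2 * π / ω) ^ 2 := by
  have hM₀ : 0 ≤ M := (norm_nonneg _).trans (hM (y t) t)
  have h := norm_sub_sub_integral_le_of_hasDerivAt (g := fun z s => ε • f z (ω * s))
    (B := ε * M) (K := ε * M) (t := t) (h := 2 * π / ω) hy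
    (fun z s => by rw [norm_smul_of_nonneg hε]; gcongr; exact hM _ _)
    (by positivity)
    (fun z z' s => by rw [← smul_sub, norm_smul_of_nonneg hε, mul_assoc]; gcongr; exact hK _ _ _)
    (((hf _).comp (continuous_const_mul ω)).const_smul ε) (by positivity)
  rwa [intervalIntegral.integral_smul,
    (hper (y t)).integral_comp_mul_eq_smul_periodAverage hω.ne', smul_smul] at h

theorem norm_sub_sub_smul_periodAverage_le_of_averaged {f : E → ℝ → E} {Y : ℝ → E}
    {ε M h : ℝ} (hε : 0 ≤ ε) (hh : 0 ≤ h) (hf : ∀ z, Continuous (f z))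
    (hM : ∀ z ξ, ‖f z ξ‖ ≤ M) (hK : ∀ z z' ξ, ‖f z ξ - f z' ξ‖ ≤ M * ‖z - z'‖)
    (hY : ∀ s, HasDerivAt Y (ε • periodAverage (f (Y s))) s) (t : ℝ) :
    ‖Y (t + h) - Y t - (ε * h) • periodAverage (f (Y t))‖ ≤ ε * M * (ε * M) * h ^ 2 := by
  have hM₀ : 0 ≤ M := (norm_nonneg _).trans (hM (Y t) t)
  have hstep := norm_sub_sub_smul_le_of_hasDerivAt (G := fun z => ε • periodAverage (f z))
    (B := ε * M) (K := ε * M) (t := t) hY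
    (fun z => by rw [norm_smul_of_nonneg hε]; gcongr; exact norm_periodAverage_le (hM z))
    (by positivity)
    (fun z z' => by
      rw [← smul_sub, norm_smul_of_nonneg hε, mul_assoc]
      gcongr
      exact norm_periodAverage_sub_le hf hK z z') hh
  rwa [smul_smul, mul_comm h ε] at hstep

theorem norm_sub_le_of_oscillatory_of_averaged {f : E → ℝ → E} {y Y : ℝ → E} {ε ω M : ℝ}
    (hε : 0 ≤ ε) (hω : 0 < ω) (hper : ∀ z, Function.Periodic (f z) (2 * π))
    (hf : ∀ z, Continuous (f z)) (hM : ∀ z ξ, ‖f z ξ‖ ≤ M)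
    (hK : ∀ z z' ξ, ‖f z ξ - f z' ξ‖ ≤ M * ‖z - z'‖)
    (hy : ∀ s, HasDerivAt y (ε • f (y s) (ω * s)) s)
    (hY : ∀ s, HasDerivAt Y (ε • periodAverage (f (Y s))) s) (t : ℝ) :
    ‖y (t + 2 * π / ω) - Y (t + 2 * π / ω)‖
      ≤ (1 + ε * M * (2 * π / ω)) * ‖y t - Y t‖
        + ε * M * (2 * π / ω) * (2 * ε * M * (2 * π / ω)) := by
  set T := 2 * π / ω
  have hT : 0 ≤ T := by positivity
  have hy₁ := norm_sub_sub_smul_periodAverage_le_of_oscillatory hε hω hper hf hM hK hy t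
  have hY₁ := norm_sub_sub_smul_periodAverage_le_of_averaged hε hT hf hM hK hY t
  have hv : ‖(ε * T) • periodAverage (f (y t)) - (ε * T) • periodAverage (f (Y t))‖
      ≤ ε * M * T * ‖y t - Y t‖ := by
    rw [← smul_sub, norm_smul_of_nonneg (by positivity)]
    calc ε * T * ‖periodAverage (f (y t)) - periodAverage (f (Y t))‖
        ≤ ε * T * (M * ‖y t - Y t‖) := by gcongr; exact norm_periodAverage_sub_le hf hK _ _
      _ = ε * M * T * ‖y t - Y t‖ := by ring
  exact (norm_sub_le_one_add_mul_add hy₁ hY₁ hv).trans_eq (by ring)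

end Increments

theorem le_mul_one_add_pow_sub_one {a : ℕ → ℝ} {q c : ℝ} (hq : 0 ≤ q) (h₀ : a 0 ≤ 0)
    (hstep : ∀ k, a (k + 1) ≤ (1 + q) * a k + q * c) (k : ℕ) :
    a k ≤ c * ((1 + q) ^ k - 1) := by
  induction k with
  | zero => simpa using h₀
  | succ k ih =>
    calc a (k + 1) ≤ (1 + q) * (c * ((1 + q) ^ k - 1)) + q * c :=
          (hstep k).trans (by gcongr)
      _ = c * ((1 + q) ^ (k + 1) - 1) := by ring

theorem one_add_pow_le_exp_mul {q : ℝ} (hq : 0 ≤ q) (k : ℕ) : (1 + q) ^ k ≤ exp (q * k) := by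
  calc (1 + q) ^ k ≤ exp q ^ k := by gcongr; linarith [add_one_le_exp q]
    _ = exp (q * k) := by rw [mul_comm, Real.exp_nat_mul]

theorem stmt_15_general (n : ℕ) (ω₀ τ₀ L : ℝ) (hω : ω₀ > 0)
    (f : (Fin n → ℝ) → ℝ → (Fin n → ℝ))
    (hper : ∀ y ξ, f y (ξ + 2 * π) = f y ξ)
    (hdiff : ContDiff ℝ 1 (fun p : (Fin n → ℝ) × ℝ => f p.1 p.2))
    (M : ℝ)
    (hbound : ∀ y ξ, ‖f y ξ‖ ≤ M)
    (hdbound : ∀ p : (Fin n → ℝ) × ℝ,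
      ‖fderiv ℝ (fun q : (Fin n → ℝ) × ℝ => f q.1 q.2) p‖ ≤ M) :
    ∃ C > 0, ∃ ε₀ > 0, ∀ ε : ℝ, 0 < ε → ε ≤ ε₀ →
      ∀ y Y : ℝ → (Fin n → ℝ),
        (∀ τ, HasDerivAt y (ε • f (y τ) (ω₀ * τ)) τ) →
        (∀ τ, HasDerivAt Y
          (ε • ((2 * π)⁻¹ • ∫ ξ in (0 : ℝ)..(2 * π), f (Y τ) ξ)) τ) →
        y τ₀ = Y τ₀ →
        ∀ j : ℕ, (j : ℝ) * (2 * π / ω₀) ≤ L / ε →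
          ‖y (τ₀ + j * (2 * π / ω₀)) - Y (τ₀ + j * (2 * π / ω₀))‖ ≤ C * ε := by
  set T := 2 * π / ω₀
  have hM : 0 ≤ M := (norm_nonneg _).trans (hbound 0 0)
  have hf : ∀ y, Continuous (f y) := fun y =>
    hdiff.continuous.comp (continuous_const.prodMk continuous_id)
  have hfLip := norm_sub_le_of_norm_fderiv_uncurry_le (hdiff.differentiable one_ne_zero) hdbound
  refine ⟨2 * M * T * exp (M * L) + 1, by positivity, 1, one_pos, ?_⟩
  intro ε hε _ y Y hy hY h₀ j hj
  have hεMT : 0 ≤ ε * M * T := by positivity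
  have hstep := norm_sub_le_of_oscillatory_of_averaged hε.le hω hper hf hbound hfLip hy hY
  have herr := le_mul_one_add_pow_sub_one (a := fun k => ‖y (τ₀ + k * T) - Y (τ₀ + k * T)‖) hεMT
    (by simp [h₀]) (fun k => by simpa [add_one_mul, ← add_assoc] using hstep _) j
  have hjT : ε * M * T * j ≤ M * L := by
    have : ε * (j * T) ≤ L := by rwa [le_div_iff₀' hε] at hj
    nlinarith
  calc ‖y (τ₀ + j * T) - Y (τ₀ + j * T)‖ ≤ 2 * ε * M * T * ((1 + ε * M * T) ^ j - 1) := herr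
    _ ≤ 2 * ε * M * T * exp (M * L) := by
      gcongr
      linarith [one_add_pow_le_exp_mul hεMT j, exp_le_exp.2 hjT]
    _ ≤ (2 * M * T * exp (M * L) + 1) * ε := by nlinarith

/-- First-order stroboscopic averaging: if f(y, ξ) is 2π-periodic in ξ,
bounded, with bounded Lipschitz first derivatives, then solutions of
dy/dτ = εf(y, ω₀τ) and of the averaged equation dY/dτ = εF₀(Y),
F₀(Y) = (1/2π)∫₀^{2π} f(Y, ξ)dξ, with the same initial value at τ₀, stay
O(ε)-close at all stroboscopic times τ₀ + j·2π/ω₀ in intervals of length L/ε. -/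
theorem stmt_15 (n : ℕ) (ω₀ τ₀ L : ℝ) (hω : ω₀ > 0) (hL : L > 0)
    (f : (Fin n → ℝ) → ℝ → (Fin n → ℝ))
    (hper : ∀ y ξ, f y (ξ + 2 * π) = f y ξ)
    (hdiff : ContDiff ℝ 1 (fun p : (Fin n → ℝ) × ℝ => f p.1 p.2))
    (M : ℝ)
    (hbound : ∀ y ξ, ‖f y ξ‖ ≤ M)
    (hdbound : ∀ p : (Fin n → ℝ) × ℝ,
      ‖fderiv ℝ (fun q : (Fin n → ℝ) × ℝ => f q.1 q.2) p‖ ≤ M)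
    (K : NNReal)
    (hdlip : LipschitzWith K (fderiv ℝ (fun q : (Fin n → ℝ) × ℝ => f q.1 q.2))) :
    ∃ C > 0, ∃ ε₀ > 0, ∀ ε : ℝ, 0 < ε → ε ≤ ε₀ →
      ∀ y Y : ℝ → (Fin n → ℝ),
        (∀ τ, HasDerivAt y (ε • f (y τ) (ω₀ * τ)) τ) →
        (∀ τ, HasDerivAt Y
          (ε • ((2 * π)⁻¹ • ∫ ξ in (0 : ℝ)..(2 * π), f (Y τ) ξ)) τ) →
        y τ₀ = Y τ₀ →
        ∀ j : ℕ, (j : ℝ) * (2 * π / ω₀) ≤ L / ε →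
          ‖y (τ₀ + j * (2 * π / ω₀)) - Y (τ₀ + j * (2 * π / ω₀))‖ ≤ C * ε :=
  stmt_15_general n ω₀ τ₀ L hω f hper hdiff M hbound hdbound
end
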